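/- Let C be a v_0-unsolvable configuration on the Flower snark J_3 with C(z_0) = C(v_1) = C(v_{−1}) = 0, let E = {x_0, y_0}, and let X be either of the sets A = {z_1, x_1, y_1} or B = {z_{−1}, x_{−1}, y_{−1}}. Then C(X) + 2·C(E) ≤ 11, where C(S) denotes the total number of pebbles on the vertices of S. -/

import Mathlib

/-- A pebbling move on the graph `G`: remove two pebbles from a vertex `u`
(which has at least two pebbles) and add one pebble to a neighbor `v` of `u`. -/
def PebblingMove {V : Type} [DecidableEq V] (G : SimpleGraph V) (C C' : V → ℕ) : Prop :=
  ∃ u v, G.Adj u v ∧ 2 ≤ C u ∧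
    C' = fun w => if w = u then C u - 2 else if w = v then C v + 1 else C w

/-- A configuration `C` is `r`-solvable if some (possibly empty) sequence of
pebbling moves starting from `C` produces a configuration with at least one
pebble on `r`. -/
def PebblingSolvable {V : Type} [DecidableEq V] (G : SimpleGraph V) (C : V → ℕ) (r : V) : Prop :=
  ∃ C' : V → ℕ, Relation.ReflTransGen (PebblingMove G) C C' ∧ 1 ≤ C' r

/-- The pebbling number of `G`: the least `t` such that for every target
vertex `r`, every configuration of size `t` is `r`-solvable. -/
noncomputable def pebblingNumber {V : Type} [DecidableEq V] [Fintype V] (G : SimpleGraph V) : ℕ :=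
  sInf {t : ℕ | ∀ (r : V) (C : V → ℕ), (∑ v, C v) = t → PebblingSolvable G C r}

/-- The 12 vertices of the Flower snark `J₃`; `vm` denotes `v_{-1}`,
`xm` denotes `x_{-1}`, etc. -/
inductive J3V : Type
  | v0 | v1 | vm | x0 | x1 | xm | y0 | y1 | ym | z0 | z1 | zm
  deriving DecidableEq

open J3V in
instance : Fintype J3V where
  elems := {v0, v1, vm, x0, x1, xm, y0, y1, ym, z0, z1, zm}
  complete := by intro x; cases x <;> first | decide | simp

open J3V in
/-- The Flower snark `J₃` (Tietze's graph), with its 18 edges. -/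
def J3 : SimpleGraph J3V := SimpleGraph.fromEdgeSet
  ({s(z0, v0), s(z0, x0), s(z0, y0), s(v0, v1), s(v0, vm),
    s(x0, x1), s(x0, xm), s(y0, y1), s(y0, ym), s(v1, vm),
    s(v1, z1), s(vm, zm), s(x1, z1), s(y1, z1), s(xm, zm),
    s(ym, zm), s(xm, y1), s(x1, ym)} : Set (Sym2 J3V))


/-! If `C(X) + 2·C(E) ≥ 12` for `X = A`, then one of four explicit pebbling strategies reaches
`v₀`: send pebbles from `x₁` and `y₁` up to `x₀, y₀` and on through `z₀`; gather four pebbles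
on `z₁` and go through `v₁`; or route `z₁ → x₁ → x₀ → z₀` (or its mirror through `y`),
topping up `z₀` from the other arm of `E`. An arithmetic case split shows the weight bound
forces one of them. The case `X = B` follows from the automorphism of `J₃` exchanging the
indices `1` and `-1`. -/

section Pebbling

variable {V : Type} [DecidableEq V] {G : SimpleGraph V}

def transferPebbles (C : V → ℕ) (u v : V) (k : ℕ) : V → ℕ :=
  fun w => if w = u then C u - 2 * k else if w = v then C v + k else C w

theorem PebblingMove.reflTransGen_transferPebbles {u v : V} (huv : G.Adj u v) (C : V → ℕ)
    (k : ℕ) (hk : 2 * k ≤ C u) :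
    Relation.ReflTransGen (PebblingMove G) C (transferPebbles C u v k) := by
  induction k generalizing C with
  | zero =>
    convert Relation.ReflTransGen.refl using 1
    funext w
    unfold transferPebbles
    split_ifs <;> subst_vars <;> simp
  | succ k ih =>
    have hmove : PebblingMove G C (transferPebbles C u v 1) := ⟨u, v, huv, by omega, rfl⟩
    have hrest := ih (transferPebbles C u v 1) (by simp [transferPebbles]; omega)
    convert Relation.ReflTransGen.head hmove hrest using 1
    funext w
    unfold transferPebbles
    split_ifs <;> simp_all <;> omega

theorem PebblingSolvable.of_one_le {C : V → ℕ} {r : V} (h : 1 ≤ C r) :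
    PebblingSolvable G C r :=
  ⟨C, .refl, h⟩

theorem PebblingSolvable.of_transferPebbles {C : V → ℕ} {u v r : V} (huv : G.Adj u v) (k : ℕ)
    (hk : 2 * k ≤ C u) (h : PebblingSolvable G (transferPebbles C u v k) r) :
    PebblingSolvable G C r :=
  let ⟨C', hreach, hr⟩ := h
  ⟨C', (PebblingMove.reflTransGen_transferPebbles huv C k hk).trans hreach, hr⟩

variable {W : Type} [DecidableEq W] {H : SimpleGraph W}

theorem PebblingMove.map_iso (φ : G ≃g H) {C C' : V → ℕ} (h : PebblingMove G C C') :
    PebblingMove H (C ∘ φ.symm) (C' ∘ φ.symm) := by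
  obtain ⟨u, v, huv, hu, rfl⟩ := h
  refine ⟨φ u, φ v, φ.map_adj_iff.mpr huv, by simpa using hu, ?_⟩
  funext w
  simp only [Function.comp_apply, RelIso.symm_apply_apply, RelIso.symm_apply_eq]

theorem PebblingSolvable.map_iso (φ : G ≃g H) {C : W → ℕ} {r : V}
    (h : PebblingSolvable G (C ∘ φ) r) : PebblingSolvable H C (φ r) := by
  obtain ⟨C', hreach, hr⟩ := h
  have hC : (C ∘ φ) ∘ φ.symm = C := by
    funext w
    simp
  refine ⟨C' ∘ φ.symm, hC ▸ hreach.lift _ fun _ _ hmove => hmove.map_iso φ, by simpa using hr⟩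

end Pebbling

namespace J3

open J3V

def swapSides : J3V → J3V
  | v1 => vm | vm => v1 | x1 => xm | xm => x1
  | y1 => ym | ym => y1 | z1 => zm | zm => z1
  | v => v

theorem swapSides_involutive : Function.Involutive swapSides := by
  intro v; cases v <;> rfl

theorem adj_swapSides_iff : ∀ a b : J3V, J3.Adj (swapSides a) (swapSides b) ↔ J3.Adj a b := by
  simp only [J3, SimpleGraph.fromEdgeSet_adj, Set.mem_insert_iff, Set.mem_singleton_iff]
  decide

def swapSidesIso : J3 ≃g J3 where
  toEquiv := swapSides_involutive.toPerm
  map_rel_iff' := adj_swapSides_iff _ _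

theorem solvable_v0_via_x0_y0 {C : J3V → ℕ}
    (h : 2 ≤ (C x0 + C x1 / 2) / 2 + (C y0 + C y1 / 2) / 2) : PebblingSolvable J3 C v0 := by
  refine .of_transferPebbles (by simp [J3] : J3.Adj x1 x0) (C x1 / 2) (by omega) ?_
  refine .of_transferPebbles (by simp [J3] : J3.Adj y1 y0) (C y1 / 2)
    (by simp [transferPebbles]; omega) ?_
  refine .of_transferPebbles (by simp [J3] : J3.Adj x0 z0) ((C x0 + C x1 / 2) / 2)
    (by simp [transferPebbles]; omega) ?_
  refine .of_transferPebbles (by simp [J3] : J3.Adj y0 z0) ((C y0 + C y1 / 2) / 2)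
    (by simp [transferPebbles]; omega) ?_
  refine .of_transferPebbles (by simp [J3] : J3.Adj z0 v0) 1 (by simp [transferPebbles]; omega) ?_
  exact .of_one_le (by simp [transferPebbles])

theorem solvable_v0_via_z1 {C : J3V → ℕ} (h : 4 ≤ C z1 + C x1 / 2 + C y1 / 2) :
    PebblingSolvable J3 C v0 := by
  refine .of_transferPebbles (by simp [J3] : J3.Adj x1 z1) (C x1 / 2) (by omega) ?_
  refine .of_transferPebbles (by simp [J3] : J3.Adj y1 z1) (C y1 / 2)
    (by simp [transferPebbles]; omega) ?_
  refine .of_transferPebbles (by simp [J3] : J3.Adj z1 v1) 2 (by simp [transferPebbles]; omega) ?_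
  refine .of_transferPebbles (by simp [J3] : J3.Adj v1 v0) 1 (by simp [transferPebbles]) ?_
  exact .of_one_le (by simp [transferPebbles])

theorem solvable_v0_via_x0 {C : J3V → ℕ}
    (h : 2 ≤ (C x0 + (C x1 + C z1 / 2) / 2) / 2 + C y0 / 2) : PebblingSolvable J3 C v0 := by
  refine .of_transferPebbles (by simp [J3] : J3.Adj z1 x1) (C z1 / 2) (by omega) ?_
  refine .of_transferPebbles (by simp [J3] : J3.Adj x1 x0) ((C x1 + C z1 / 2) / 2)
    (by simp [transferPebbles]; omega) ?_
  refine .of_transferPebbles (by simp [J3] : J3.Adj x0 z0) ((C x0 + (C x1 + C z1 / 2) / 2) / 2)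
    (by simp [transferPebbles]; omega) ?_
  refine .of_transferPebbles (by simp [J3] : J3.Adj y0 z0) (C y0 / 2)
    (by simp [transferPebbles]; omega) ?_
  refine .of_transferPebbles (by simp [J3] : J3.Adj z0 v0) 1 (by simp [transferPebbles]; omega) ?_
  exact .of_one_le (by simp [transferPebbles])

theorem solvable_v0_via_y0 {C : J3V → ℕ}
    (h : 2 ≤ (C y0 + (C y1 + C z1 / 2) / 2) / 2 + C x0 / 2) : PebblingSolvable J3 C v0 := by
  refine .of_transferPebbles (by simp [J3] : J3.Adj z1 y1) (C z1 / 2) (by omega) ?_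
  refine .of_transferPebbles (by simp [J3] : J3.Adj y1 y0) ((C y1 + C z1 / 2) / 2)
    (by simp [transferPebbles]; omega) ?_
  refine .of_transferPebbles (by simp [J3] : J3.Adj y0 z0) ((C y0 + (C y1 + C z1 / 2) / 2) / 2)
    (by simp [transferPebbles]; omega) ?_
  refine .of_transferPebbles (by simp [J3] : J3.Adj x0 z0) (C x0 / 2)
    (by simp [transferPebbles]; omega) ?_
  refine .of_transferPebbles (by simp [J3] : J3.Adj z0 v0) 1 (by simp [transferPebbles]; omega) ?_
  exact .of_one_le (by simp [transferPebbles])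

theorem solvable_v0_of_twelve_le {C : J3V → ℕ}
    (h : 12 ≤ 2 * C x0 + 2 * C y0 + C z1 + C x1 + C y1) : PebblingSolvable J3 C v0 := by
  have : 2 ≤ (C x0 + C x1 / 2) / 2 + (C y0 + C y1 / 2) / 2 ∨ 4 ≤ C z1 + C x1 / 2 + C y1 / 2 ∨
      2 ≤ (C x0 + (C x1 + C z1 / 2) / 2) / 2 + C y0 / 2 ∨
      2 ≤ (C y0 + (C y1 + C z1 / 2) / 2) / 2 + C x0 / 2 := by
    omega
  rcases this with h | h | h | h
  exacts [solvable_v0_via_x0_y0 h, solvable_v0_via_z1 h, solvable_v0_via_x0 h,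
    solvable_v0_via_y0 h]

end J3

theorem J3_v0_unsolvable_XE_general (C : J3V → ℕ)
    (h : ¬ PebblingSolvable J3 C J3V.v0) :
    (∑ v ∈ ({J3V.z1, J3V.x1, J3V.y1} : Finset J3V), C v) +
      2 * (∑ v ∈ ({J3V.x0, J3V.y0} : Finset J3V), C v) ≤ 11 ∧
    (∑ v ∈ ({J3V.zm, J3V.xm, J3V.ym} : Finset J3V), C v) +
      2 * (∑ v ∈ ({J3V.x0, J3V.y0} : Finset J3V), C v) ≤ 11 := by
  simp only [Finset.sum_insert, Finset.mem_insert, Finset.mem_singleton, reduceCtorEq,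
    or_self, not_false_eq_true, Finset.sum_singleton]
  constructor
  · by_contra! hC
    exact h (J3.solvable_v0_of_twelve_le (by omega))
  · by_contra! hC
    have hswap : PebblingSolvable J3 (C ∘ J3.swapSidesIso) J3V.v0 :=
      J3.solvable_v0_of_twelve_le
        (show 12 ≤ 2 * C J3V.x0 + 2 * C J3V.y0 + C J3V.zm + C J3V.xm + C J3V.ym by omega)
    exact h (hswap.map_iso J3.swapSidesIso)

/-- For a `v₀`-unsolvable configuration `C` on `J₃` with
`C(z₀) = C(v₁) = C(v₋₁) = 0`, with `E = {x₀, y₀}` and `X` either of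
`A = {z₁, x₁, y₁}` or `B = {z₋₁, x₋₁, y₋₁}`, we have `C(X) + 2·C(E) ≤ 11`. -/
theorem J3_v0_unsolvable_XE (C : J3V → ℕ)
    (h : ¬ PebblingSolvable J3 C J3V.v0)
    (hz0 : C J3V.z0 = 0) (hv1 : C J3V.v1 = 0) (hvm : C J3V.vm = 0) :
    (∑ v ∈ ({J3V.z1, J3V.x1, J3V.y1} : Finset J3V), C v) +
      2 * (∑ v ∈ ({J3V.x0, J3V.y0} : Finset J3V), C v) ≤ 11 ∧
    (∑ v ∈ ({J3V.zm, J3V.xm, J3V.ym} : Finset J3V), C v) +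
      2 * (∑ v ∈ ({J3V.x0, J3V.y0} : Finset J3V), C v) ≤ 11 :=
  J3_v0_unsolvable_XE_general C h
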